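/- arXiv:1003.4813 — 3 statements merged into one kernel-verified Lean document; each statement's English description precedes it below -/
import Mathlib

section
/- For every complex number z with Re(z) > 0 and z ≠ 1, one has ∫_0^∞ u^{z-1}/(1 + e^u) du = (1 - 2^{1-z})·Γ(z)·ζ(z). -/
/-!
For `1 < re s`, expanding `1 / (1 + eᵘ) = ∑ (-1)ⁿ e^{-(n+1)u}` and integrating termwise gives
`Γ(s) η(s)` with `η(s) = ∑ (-1)ⁿ (n+1)^{-s} = (1 - 2^{1-s}) ζ(s)`, since the odd-indexed terms of
`ζ - η` add up to `2 · 2^{-s} ζ`. Both sides are holomorphic on the connected set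
`{0 < re s} \ {1}`, so the identity extends there.
-/

open Complex MeasureTheory Filter Set Topology Asymptotics

lemma Real.hasSum_inv_one_add_exp {t : ℝ} (ht : 0 < t) :
    HasSum (fun n : ℕ => (-1) ^ n * Real.exp (-(n + 1) * t)) (1 + Real.exp t)⁻¹ := by
  have hr : |-Real.exp (-t)| < 1 := by
    rw [abs_neg, abs_of_pos (Real.exp_pos _)]
    exact Real.exp_lt_one_iff.mpr (neg_lt_zero.mpr ht)
  have hsum : Real.exp (-t) * (1 - -Real.exp (-t))⁻¹ = (1 + Real.exp t)⁻¹ := by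
    rw [Real.exp_neg, ← mul_inv, mul_sub, mul_one, mul_neg,
      mul_inv_cancel₀ (Real.exp_pos t).ne', sub_neg_eq_add, add_comm]
  refine hsum ▸ ((hasSum_geometric_of_abs_lt_one hr).mul_left _).congr_fun fun n => ?_
  rw [neg_pow (Real.exp _), ← Real.exp_nat_mul, mul_left_comm, ← Real.exp_add]
  ring_nf

lemma hasSum_one_div_nat_add_one_cpow {s : ℂ} (hs : 1 < s.re) :
    HasSum (fun n : ℕ => 1 / (n + 1 : ℂ) ^ s) (riemannZeta s) := by
  rw [zeta_eq_tsum_one_div_nat_add_one_cpow hs]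
  exact_mod_cast
    ((summable_nat_add_iff 1).mpr (Complex.summable_one_div_nat_cpow.mpr hs)).hasSum

lemma hasSum_neg_one_pow_div_nat_add_one_cpow {s : ℂ} (hs : 1 < s.re) :
    HasSum (fun n : ℕ => (-1) ^ n / (n + 1 : ℂ) ^ s) ((1 - 2 ^ (1 - s)) * riemannZeta s) := by
  have hζ := hasSum_one_div_nat_add_one_cpow hs
  have hodd : HasSum (fun n : ℕ => (1 - (-1) ^ n) / (n + 1 : ℂ) ^ s)
      (2 ^ (1 - s) * riemannZeta s) := by
    have hinj : Function.Injective fun m : ℕ => 2 * m + 1 := fun a b h => by simpa using h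
    rw [← hinj.hasSum_iff]
    · refine (hζ.mul_left (2 ^ (1 - s))).congr_fun fun m => ?_
      have h2m : ((2 * m + 1 : ℕ) : ℂ) + 1 = ((2 : ℕ) : ℂ) * ((m + 1 : ℕ) : ℂ) := by
        push_cast; ring
      rw [Function.comp_apply, (odd_two_mul_add_one m).neg_one_pow, h2m, natCast_mul_natCast_cpow,
        cpow_sub _ _ two_ne_zero, cpow_one]
      push_cast
      ring
    · rintro n hn
      obtain ⟨m, rfl⟩ : Even n := by
        simpa [← Nat.not_odd_iff_even, Odd, eq_comm, two_mul] using hn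
      simp
  rw [one_sub_mul]
  exact (hζ.sub hodd).congr_fun fun n => by ring

lemma mellin_inv_one_add_exp_of_one_lt_re {s : ℂ} (hs : 1 < s.re) :
    mellin (fun t : ℝ => (1 + (Real.exp t : ℂ))⁻¹) s
      = (1 - 2 ^ (1 - s)) * Gamma s * riemannZeta s := by
  have hsum : Summable fun n : ℕ => ‖(-1 : ℂ) ^ n‖ / ((n : ℝ) + 1) ^ s.re := by
    simpa using (summable_nat_add_iff 1).mpr (Real.summable_one_div_nat_rpow.mpr hs)
  have hexp (t : ℝ) (ht : t ∈ Ioi 0) :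
      HasSum (fun n : ℕ => (-1 : ℂ) ^ n * Real.exp (-(n + 1) * t)) (1 + (Real.exp t : ℂ))⁻¹ := by
    simpa using hasSum_ofReal.mpr (Real.hasSum_inv_one_add_exp ht)
  have hmellin := hasSum_mellin (fun n : ℕ => Or.inr n.cast_add_one_pos) (zero_lt_one.trans hs)
    hexp hsum
  rw [mul_assoc, mul_left_comm]
  refine hmellin.unique
    (((hasSum_neg_one_pow_div_nat_add_one_cpow hs).mul_left (Gamma s)).congr_fun fun n => ?_)
  push_cast
  ring

lemma norm_inv_one_add_exp (t : ℝ) : ‖(1 + (Real.exp t : ℂ))⁻¹‖ = (1 + Real.exp t)⁻¹ := by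
  rw [norm_inv, ← ofReal_one, ← ofReal_add, norm_real, Real.norm_of_nonneg (by positivity)]

lemma differentiableOn_mellin_inv_one_add_exp :
    DifferentiableOn ℂ (mellin fun t : ℝ => (1 + (Real.exp t : ℂ))⁻¹) {s | 0 < s.re} := by
  have hcont : Continuous fun t : ℝ => (1 + (Real.exp t : ℂ))⁻¹ :=
    Continuous.inv₀ (by fun_prop) fun t => by
      rw [← ofReal_one, ← ofReal_add, ofReal_ne_zero]; positivity
  have htop : (fun t : ℝ => (1 + (Real.exp t : ℂ))⁻¹) =O[atTop] fun t => Real.exp (-1 * t) := by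
    refine isBigO_of_le _ fun t => ?_
    rw [norm_inv_one_add_exp, neg_one_mul, Real.exp_neg, Real.norm_of_nonneg (by positivity)]
    exact inv_anti₀ (Real.exp_pos t) (by linarith)
  have hbot : (fun t : ℝ => (1 + (Real.exp t : ℂ))⁻¹) =O[𝓝[>] 0] (· ^ (-(0 : ℝ))) := by
    refine isBigO_of_le _ fun t => ?_
    rw [norm_inv_one_add_exp, neg_zero, Real.rpow_zero, norm_one]
    exact inv_le_one_of_one_le₀ (by linarith [Real.exp_pos t])
  exact fun s hs => (mellin_differentiableAt_of_isBigO_rpow_exp one_pos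
    (hcont.locallyIntegrable.locallyIntegrableOn _) htop hbot hs).differentiableWithinAt

lemma differentiableOn_one_sub_two_cpow_mul_Gamma_mul_riemannZeta :
    DifferentiableOn ℂ (fun s => (1 - 2 ^ (1 - s)) * Gamma s * riemannZeta s)
      ({s | 0 < s.re} \ {1}) := by
  rintro s ⟨hs, hs1⟩
  have hΓ : DifferentiableAt ℂ Gamma s :=
    differentiableAt_Gamma s fun m hm => by
      simp only [mem_ofPred_eq, hm, neg_re, natCast_re, Left.neg_pos_iff] at hs
      exact (Nat.cast_nonneg m).not_gt hs
  exact (((by fun_prop : DifferentiableAt ℂ (fun s : ℂ => 1 - (2 : ℂ) ^ (1 - s)) s).mul hΓ).mul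
    (differentiableAt_riemannZeta hs1)).differentiableWithinAt

lemma isPreconnected_re_pos_diff_one : IsPreconnected ({s : ℂ | 0 < s.re} \ {1}) := by
  set H := {s : ℂ | 0 < s.re}
  have hH : Convex ℝ H := convex_halfSpace_re_gt 0
  have upper := (hH.inter (convex_halfSpace_im_gt 0)).isPreconnected
  have strip := (hH.inter (convex_halfSpace_re_lt 1)).isPreconnected
  have lower := (hH.inter (convex_halfSpace_im_lt 0)).isPreconnected
  have right := (convex_halfSpace_re_gt 1).isPreconnected
  have hcover : H \ {1} = ((H ∩ {s | 0 < s.im}) ∪ (H ∩ {s | s.re < 1}))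
      ∪ ((H ∩ {s | s.im < 0}) ∪ {s | 1 < s.re}) := by
    ext s
    simp only [H, Set.mem_sdiff, mem_inter_iff, mem_union, mem_ofPred_eq, mem_singleton_iff,
      Complex.ext_iff, one_re, one_im]
    constructor
    · rintro ⟨hre, hs1⟩
      rcases lt_trichotomy s.im 0 with him | him | him <;>
        rcases lt_trichotomy s.re 1 with h1 | h1 | h1 <;> tauto
    · rintro ((⟨hre, him⟩ | ⟨hre, h1⟩) | (⟨hre, him⟩ | h1)) <;>
        refine ⟨by linarith, fun h => ?_⟩ <;> linarith [h.1, h.2]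
  rw [hcover]
  refine (upper.union (1 / 2 + I) ?_ ?_ strip).union (1 / 2 - I) ?_ ?_
    (lower.union (2 - I) ?_ ?_ right) <;> norm_num [H]

/-- For `Re z > 0`, `z ≠ 1`:
`∫_0^∞ u^{z-1}/(1+e^u) du = (1 - 2^{1-z}) Γ(z) ζ(z)`. -/
theorem integral_eq_eta_Gamma_zeta (z : ℂ) (hz : 0 < z.re) (hz1 : z ≠ 1) :
    ∫ u in Set.Ioi (0 : ℝ), (u : ℂ) ^ (z - 1) / (1 + Real.exp u)
      = (1 - (2 : ℂ) ^ (1 - z)) * Complex.Gamma z * riemannZeta z := by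
  have hU : IsOpen ({s : ℂ | 0 < s.re} \ {1}) :=
    (isOpen_lt continuous_const continuous_re).sdiff isClosed_singleton
  have hnear_two : mellin (fun t : ℝ => (1 + (Real.exp t : ℂ))⁻¹)
      =ᶠ[𝓝 2] fun s => (1 - 2 ^ (1 - s)) * Gamma s * riemannZeta s := by
    filter_upwards [(isOpen_lt continuous_const continuous_re).mem_nhds
      (by norm_num : (1 : ℝ) < (2 : ℂ).re)] with s hs using mellin_inv_one_add_exp_of_one_lt_re hs
  have heq := ((differentiableOn_mellin_inv_one_add_exp.mono sdiff_subset).analyticOnNhd hU)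
    |>.eqOn_of_preconnected_of_eventuallyEq
      (differentiableOn_one_sub_two_cpow_mul_Gamma_mul_riemannZeta.analyticOnNhd hU)
      isPreconnected_re_pos_diff_one (by norm_num) hnear_two
  simpa only [mellin, smul_eq_mul, div_eq_mul_inv] using heq ⟨hz, hz1⟩
end

section
/- Let z : [0, ∞) → ℂ satisfy z(t) ≠ 1 and ζ(z(t)) = e^{-t}·ζ(z(0)) for all t ≥ 0. Then lim sup_{t → ∞} Re(z(t)) ≤ 1; equivalently, for every ε > 0 there exists T such that Re(z(t)) < 1 + ε for all t ≥ T. -/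
/-!
On `Re s ≥ 1 + ε` the zeta function is bounded below, `‖ζ s‖ ≥ ε / (1 + ε)`, whereas
`‖ζ (z t)‖ = e^{-t} ‖ζ (z 0)‖` tends to `0`; so eventually `Re (z t) < 1 + ε`.
-/

open Complex Filter Topology ArithmeticFunction LSeries.notation ArithmeticFunction.Moebius

/-- `termTSum s = 1 / (s - 1) - ζ(s) / s` sums the nonnegative errors of comparing `n ^ (-s)` with
`∫ₙⁿ⁺¹ x ^ (-s) dx`. -/
lemma tsum_one_div_nat_add_one_rpow_le {s : ℝ} (hs : 1 < s) :
    ∑' n : ℕ, 1 / (n + 1 : ℝ) ^ s ≤ s / (s - 1) := by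
  have hnonneg : 0 ≤ ZetaAsymptotics.termTSum s :=
    tsum_nonneg fun n ↦ ZetaAsymptotics.term_nonneg (n + 1) s
  rw [ZetaAsymptotics.termTSum_of_lt hs] at hnonneg
  field_simp at hnonneg
  linarith

lemma norm_LSeries_le_of_norm_le_one {f : ℕ → ℂ} (hf : ∀ n, ‖f n‖ ≤ 1) {s : ℂ}
    (hs : 1 < s.re) : ‖LSeries f s‖ ≤ s.re / (s.re - 1) := by
  have hsum : Summable fun n : ℕ ↦ 1 / (n + 1 : ℝ) ^ s.re := by
    exact_mod_cast (summable_nat_add_iff 1).mpr (Real.summable_one_div_nat_rpow.mpr hs)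
  have hterm (n : ℕ) : ‖LSeries.term f s (n + 1)‖ ≤ 1 / (n + 1 : ℝ) ^ s.re := by
    rw [LSeries.norm_term_eq, if_neg n.succ_ne_zero]
    push_cast
    gcongr
    exact hf _
  have hnorm : Summable fun n ↦ ‖LSeries.term f s n‖ :=
    (summable_nat_add_iff 1).mp (hsum.of_nonneg_of_le (fun _ ↦ norm_nonneg _) hterm)
  calc ‖LSeries f s‖ ≤ ∑' n, ‖LSeries.term f s n‖ := norm_tsum_le_tsum_norm hnorm
    _ = ∑' n, ‖LSeries.term f s (n + 1)‖ := by
        rw [hnorm.tsum_eq_zero_add, LSeries.term_zero, norm_zero, zero_add]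
    _ ≤ ∑' n : ℕ, 1 / (n + 1 : ℝ) ^ s.re :=
        ((summable_nat_add_iff 1).mpr hnorm).tsum_le_tsum hterm hsum
    _ ≤ s.re / (s.re - 1) := tsum_one_div_nat_add_one_rpow_le hs

/-- `1 / ζ` is the `L`-series of the Möbius function, whose coefficients are bounded by `1`. -/
lemma div_le_norm_riemannZeta {s : ℂ} (hs : 1 < s.re) :
    (s.re - 1) / s.re ≤ ‖riemannZeta s‖ := by
  have hinv : riemannZeta s * LSeries ↗μ s = 1 := by
    rw [← LSeries_one_eq_riemannZeta hs]
    exact LSeries_one_mul_Lseries_moebius hs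
  have hμ : ‖LSeries ↗μ s‖ ≤ s.re / (s.re - 1) :=
    norm_LSeries_le_of_norm_le_one (fun n ↦ by exact_mod_cast abs_moebius_le_one) hs
  have hμpos : 0 < ‖LSeries ↗μ s‖ :=
    norm_pos_iff.mpr (right_ne_zero_of_mul_eq_one hinv)
  calc (s.re - 1) / s.re = (s.re / (s.re - 1))⁻¹ := (inv_div _ _).symm
    _ ≤ ‖LSeries ↗μ s‖⁻¹ := inv_anti₀ hμpos hμ
    _ = ‖riemannZeta s‖ := by rw [← norm_inv, eq_inv_of_mul_eq_one_left hinv]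

lemma re_lt_of_norm_riemannZeta_lt {s : ℂ} {ε : ℝ} (hε : 0 < ε)
    (hs : ‖riemannZeta s‖ < ε / (1 + ε)) : s.re < 1 + ε := by
  by_contra! hre
  have hmono : ε / (1 + ε) ≤ (s.re - 1) / s.re := by
    rw [div_le_div_iff₀ (by positivity) (by linarith)]
    nlinarith
  linarith [div_le_norm_riemannZeta (s := s) (by linarith)]

theorem limsup_re_le_one_general (z : ℝ → ℂ)
    (hz : ∀ t : ℝ, 0 ≤ t →
      riemannZeta (z t) = Complex.exp (-t) * riemannZeta (z 0)) :
    ∀ ε : ℝ, 0 < ε → ∃ T : ℝ, 0 ≤ T ∧ ∀ t : ℝ, T ≤ t → (z t).re < 1 + ε := by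
  intro ε hε
  have hdecay : Tendsto (fun t ↦ Real.exp (-t) * ‖riemannZeta (z 0)‖) atTop (𝓝 0) := by
    simpa using Real.tendsto_exp_neg_atTop_nhds_zero.mul_const ‖riemannZeta (z 0)‖
  have hbound : 0 < ε / (1 + ε) := by positivity
  obtain ⟨T, hT⟩ := (hdecay.eventually (eventually_lt_nhds hbound)).exists_forall_of_atTop
  refine ⟨max T 0, le_max_right _ _, fun t ht ↦ re_lt_of_norm_riemannZeta_lt hε ?_⟩
  rw [hz t (le_of_max_le_right ht), norm_mul, Complex.norm_exp]
  simpa using hT t (le_of_max_le_left ht)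

/-- If `z(t) ≠ 1` and `ζ(z(t)) = e^{-t} ζ(z(0))` for `t ≥ 0`, then
`limsup_{t→∞} Re z(t) ≤ 1`: for every `ε > 0` there is `T` with
`Re z(t) < 1 + ε` for all `t ≥ T`. -/
theorem limsup_re_le_one (z : ℝ → ℂ)
    (hne : ∀ t : ℝ, 0 ≤ t → z t ≠ 1)
    (hz : ∀ t : ℝ, 0 ≤ t →
      riemannZeta (z t) = Complex.exp (-t) * riemannZeta (z 0)) :
    ∀ ε : ℝ, 0 < ε → ∃ T : ℝ, 0 ≤ T ∧ ∀ t : ℝ, T ≤ t → (z t).re < 1 + ε :=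
  limsup_re_le_one_general z hz
end

section
/- Let α ≠ 1 be a complex number, ε > 0 with 1 ∉ closedBall(α, ε), and suppose α is the only zero of ζ in the closed disc of radius ε centered at α. Let z : [0, ∞) → ℂ be continuous with z(t) ∈ closedBall(α, ε) and ζ(z(t)) = e^{-t}·ζ(z(0)) for all t ≥ 0. Then z(t) → α as t → ∞. -/
open Complex Filter Topology Metric

/-- If `α` is the only zero of `ζ` in `closedBall α ε` (which avoids `1`),
and a continuous trajectory stays in this ball with `ζ(z(t)) = e^{-t} ζ(z(0))`,
then `z(t) → α`. -/
theorem flow_tendsto_zero_of_zeta (α : ℂ) (ε : ℝ) (hε : 0 < ε) (hα1 : α ≠ 1)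
    (hball : (1 : ℂ) ∉ closedBall α ε)
    (hζα : riemannZeta α = 0)
    (huniq : ∀ w ∈ closedBall α ε, riemannZeta w = 0 → w = α)
    (z : ℝ → ℂ) (hcont : ContinuousOn z (Set.Ici 0))
    (hmem : ∀ t : ℝ, 0 ≤ t → z t ∈ closedBall α ε)
    (hz : ∀ t : ℝ, 0 ≤ t →
      riemannZeta (z t) = Complex.exp (-t) * riemannZeta (z 0)) :
    Tendsto z atTop (𝓝 α) := by
  rw [Metric.tendsto_atTop]
  intro δ hδ
  by_cases hS : (closedBall α ε \ ball α δ).Nonempty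
  · have hScomp : IsCompact (closedBall α ε \ ball α δ) :=
      (isCompact_closedBall α ε).diff isOpen_ball
    have hconton : ContinuousOn (fun w => ‖riemannZeta w‖) (closedBall α ε \ ball α δ) := by
      intro w hw
      have hw1 : w ≠ 1 := fun h => hball (h ▸ hw.1)
      exact ((differentiableAt_riemannZeta hw1).continuousAt.norm).continuousWithinAt
    obtain ⟨w₀, hw₀S, hmin⟩ := hScomp.exists_isMinOn hS hconton
    have hm : 0 < ‖riemannZeta w₀‖ := by
      rw [norm_pos_iff]
      intro h
      have := huniq w₀ hw₀S.1 h
      subst this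
      exact hw₀S.2 (mem_ball_self hδ)
    have hlim : Tendsto (fun t : ℝ => Real.exp (-t) * ‖riemannZeta (z 0)‖) atTop (𝓝 0) := by
      simpa using (Real.tendsto_exp_atBot.comp tendsto_neg_atTop_atBot).mul_const
        ‖riemannZeta (z 0)‖
    have hev : ∀ᶠ t : ℝ in atTop, Real.exp (-t) * ‖riemannZeta (z 0)‖ < ‖riemannZeta w₀‖ :=
      hlim.eventually (gt_mem_nhds hm)
    obtain ⟨N, hN⟩ := eventually_atTop.mp hev
    refine ⟨max N 0, fun t ht => ?_⟩
    have ht0 : (0 : ℝ) ≤ t := le_trans (le_max_right N 0) ht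
    have htN : N ≤ t := le_trans (le_max_left N 0) ht
    have hnorm : ‖riemannZeta (z t)‖ = Real.exp (-t) * ‖riemannZeta (z 0)‖ := by
      rw [hz t ht0, norm_mul]
      congr 1
      simpa using Complex.norm_exp (-(t : ℂ))
    have hlt : ‖riemannZeta (z t)‖ < ‖riemannZeta w₀‖ := by
      rw [hnorm]; exact hN t htN
    by_contra hcon
    push_neg at hcon
    have hzS : z t ∈ closedBall α ε \ ball α δ :=
      ⟨hmem t ht0, fun h => absurd (mem_ball.mp h) (not_lt.mpr hcon)⟩
    exact absurd (hmin hzS) (not_le.mpr hlt)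
  · refine ⟨0, fun t ht => ?_⟩
    have : z t ∈ ball α δ := by
      by_contra h
      exact hS ⟨z t, hmem t ht, h⟩
    exact mem_ball.mp this
end
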